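/- arXiv:1709.03882 — 4 statements merged into one kernel-verified Lean document; each statement's English description precedes it below -/
import Mathlib

section
/- Let I be a monomial ideal of S = K[x_1,...,x_n], let S' = K[x_1,...,x_{j−1},x_{j+1},...,x_n] be the polynomial ring obtained from S by deleting the variable x_j, and set I' = I ∩ S'. Then sreg(S'/I') ≤ sreg(S/I). -/
open MvPolynomial

/-- The `k`-th symbolic power of the cover ideal of a graph `G`:
`J(G)^(k) = ⋂_{{x,y} ∈ E(G)} (x,y)^k`. -/
noncomputable def coverIdealSymbPow (K : Type*) [Field K] {V : Type*}
    (G : SimpleGraph V) (k : ℕ) : Ideal (MvPolynomial V K) :=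
  ⨅ e : {p : V × V // G.Adj p.1 p.2}, (Ideal.span {X e.val.1, X e.val.2}) ^ k

/-- The "Stanley set" of monomials `u·K[Z]`, recorded by exponent vectors:
all exponent vectors of the form `u + w` with `w` supported in `Z`. -/
def stanleyPiece {σ : Type*} (u : σ →₀ ℕ) (Z : Finset σ) : Set (σ →₀ ℕ) :=
  {v | u ≤ v ∧ ∀ i ∉ Z, v i = u i}

/-- A Stanley decomposition of a set of monomials (recorded by their exponent
vectors): a partition into finitely many Stanley sets `u_i·K[Z_i]`. -/
structure StanleyDecomp {σ : Type*} (A : Set (σ →₀ ℕ)) where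
  m : ℕ
  u : Fin m → (σ →₀ ℕ)
  Z : Fin m → Finset σ
  cover : A = ⋃ i, stanleyPiece (u i) (Z i)
  disj : ∀ i j, i ≠ j → Disjoint (stanleyPiece (u i) (Z i)) (stanleyPiece (u j) (Z j))

/-- Stanley depth of a set of monomials: the maximum over all Stanley
decompositions of the minimum `|Z_i|` (with value `⊤` on the empty set,
corresponding to the convention `sdepth 0 = ∞`). -/
noncomputable def sdepthSet {σ : Type*} (A : Set (σ →₀ ℕ)) : ℕ∞ :=
  ⨆ D : StanleyDecomp A, ⨅ i, ((D.Z i).card : ℕ∞)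

/-- The set of (exponent vectors of) monomials belonging to an ideal. -/
def monomialSet {σ K : Type*} [CommSemiring K] (I : Ideal (MvPolynomial σ K)) :
    Set (σ →₀ ℕ) :=
  {v | MvPolynomial.monomial v (1 : K) ∈ I}

/-- Stanley depth of a monomial ideal `I ⊆ S = K[x_1,…,x_n]`. -/
noncomputable def sdepthIdeal {σ K : Type*} [CommSemiring K]
    (I : Ideal (MvPolynomial σ K)) : ℕ∞ :=
  sdepthSet (monomialSet I)

/-- Stanley depth of the quotient `S/I` of the polynomial ring by a monomial ideal. -/
noncomputable def sdepthQuot {σ K : Type*} [CommSemiring K]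
    (I : Ideal (MvPolynomial σ K)) : ℕ∞ :=
  sdepthSet (monomialSet I)ᶜ

/-- Stanley regularity of a set of monomials: the minimum over all Stanley
decompositions of the maximum degree `deg u_i`. -/
noncomputable def sregSet {σ : Type*} (A : Set (σ →₀ ℕ)) : ℕ∞ :=
  ⨅ D : StanleyDecomp A, ⨆ i, ((D.u i).sum (fun _ e => e) : ℕ∞)

/-- An ideal of the polynomial ring is a monomial ideal if it is generated by monomials. -/
def Ideal.IsMonomialIdeal {σ K : Type*} [CommSemiring K]
    (I : Ideal (MvPolynomial σ K)) : Prop :=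
  ∃ A : Set (σ →₀ ℕ), I = Ideal.span ((fun v => MvPolynomial.monomial v (1 : K)) '' A)

/-- The inclusion `S' = K[x_i : i ≠ j] → S = K[x_1,…,x_n]` of the polynomial
ring obtained by deleting the variable `x_j`. -/
noncomputable def varDeletionHom (K : Type*) [Field K] {n : ℕ} (j : Fin n) :
    MvPolynomial {i : Fin n // i ≠ j} K →ₐ[K] MvPolynomial (Fin n) K :=
  MvPolynomial.rename Subtype.val

/-- `I ∩ S'`: the restriction of an ideal `I ⊆ S` to the polynomial subring
`S'` obtained by deleting the variable `x_j`, realized as the preimage of `I`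
under the inclusion `S' → S`. -/
noncomputable def restrictIdeal (K : Type*) [Field K] {n : ℕ} (j : Fin n)
    (I : Ideal (MvPolynomial (Fin n) K)) : Ideal (MvPolynomial {i : Fin n // i ≠ j} K) :=
  Ideal.comap (varDeletionHom K j) I


section ProofAux

variable {K : Type*} [Field K] {n : ℕ}

private lemma monomialSet_restrict (K : Type*) [Field K] {n : ℕ} (j : Fin n)
    (I : Ideal (MvPolynomial (Fin n) K)) :
    monomialSet (restrictIdeal K j I) =
      (Finsupp.mapDomain (Subtype.val : {i : Fin n // i ≠ j} → Fin n)) ⁻¹' (monomialSet I) := by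
  ext v
  simp only [monomialSet, restrictIdeal, Set.mem_setOf_eq, Set.mem_preimage, Ideal.mem_comap]
  rw [show (varDeletionHom K j) (MvPolynomial.monomial v (1 : K)) = MvPolynomial.monomial
      (Finsupp.mapDomain Subtype.val v) (1 : K) from MvPolynomial.rename_monomial _ _ _]

private lemma mapDomain_val_apply_ne {j : Fin n} (v : {i : Fin n // i ≠ j} →₀ ℕ)
    (i : {i : Fin n // i ≠ j}) :
    Finsupp.mapDomain (Subtype.val : {i : Fin n // i ≠ j} → Fin n) v i.val = v i :=
  Finsupp.mapDomain_apply Subtype.val_injective v i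

private lemma mapDomain_val_apply_j {j : Fin n} (v : {i : Fin n // i ≠ j} →₀ ℕ) :
    Finsupp.mapDomain (Subtype.val : {i : Fin n // i ≠ j} → Fin n) v j = 0 := by
  apply Finsupp.mapDomain_notin_range
  rintro ⟨⟨k, hk⟩, h⟩
  exact hk h

private lemma mem_piece_iff (j : Fin n) (u : Fin n →₀ ℕ) (hu : u j = 0) (Z : Finset (Fin n))
    (v : {i : Fin n // i ≠ j} →₀ ℕ) :
    Finsupp.mapDomain Subtype.val v ∈ stanleyPiece u Z ↔
      v ∈ stanleyPiece (u.subtypeDomain (· ≠ j)) (Z.subtype (· ≠ j)) := by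
  constructor
  · rintro ⟨h1, h2⟩
    refine ⟨fun i => ?_, fun i hi => ?_⟩
    · have := h1 i.val
      rw [mapDomain_val_apply_ne] at this
      rwa [Finsupp.subtypeDomain_apply]
    · have hZ : (i : Fin n) ∉ Z := fun h => hi (Finset.mem_subtype.mpr h)
      have := h2 i.val hZ
      rw [mapDomain_val_apply_ne] at this
      rw [Finsupp.subtypeDomain_apply]
      exact this
  · rintro ⟨h1, h2⟩
    refine ⟨fun k => ?_, fun k hk => ?_⟩
    · by_cases hkj : k = j
      · subst hkj; simp [hu]
      · have := h1 ⟨k, hkj⟩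
        rw [Finsupp.subtypeDomain_apply] at this
        rw [show k = (⟨k, hkj⟩ : {i : Fin n // i ≠ j}).val from rfl, mapDomain_val_apply_ne]
        exact this
    · by_cases hkj : k = j
      · subst hkj; rw [mapDomain_val_apply_j, hu]
      · have hZ' : (⟨k, hkj⟩ : {i : Fin n // i ≠ j}) ∉ Z.subtype (· ≠ j) := by
          simpa [Finset.mem_subtype] using hk
        have := h2 _ hZ'
        rw [Finsupp.subtypeDomain_apply] at this
        rw [show k = (⟨k, hkj⟩ : {i : Fin n // i ≠ j}).val from rfl, mapDomain_val_apply_ne]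
        exact this

private lemma uj_eq_zero {j : Fin n} {u : Fin n →₀ ℕ} {Z : Finset (Fin n)}
    {v : {i : Fin n // i ≠ j} →₀ ℕ}
    (h : Finsupp.mapDomain Subtype.val v ∈ stanleyPiece u Z) : u j = 0 := by
  have hj := mapDomain_val_apply_j v
  have := h.1 j
  omega

end ProofAux

set_option maxHeartbeats 1000000 in
/-- Let `I` be a monomial ideal of `S = K[x_1,…,x_n]`, let
`S'` be the polynomial ring obtained from `S` by deleting the variable `x_j`,
and let `I' = I ∩ S'`. Then `sreg(S'/I') ≤ sreg(S/I)`. -/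
theorem sreg_quot_restrict_le (K : Type*) [Field K] (n : ℕ) (j : Fin n)
    (I : Ideal (MvPolynomial (Fin n) K)) (hI : I.IsMonomialIdeal) :
    sregSet (monomialSet (restrictIdeal K j I))ᶜ ≤ sregSet (monomialSet I)ᶜ := by
  classical
  rw [sregSet]
  apply le_iInf
  intro D
  set s := {i : Fin D.m // D.u i j = 0} with hs
  let f : Fin (Fintype.card s) ≃ s := (Fintype.equivFin s).symm
  have hA' : ∀ v : {i : Fin n // i ≠ j} →₀ ℕ,
      v ∈ (monomialSet (restrictIdeal K j I))ᶜ ↔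
        Finsupp.mapDomain Subtype.val v ∈ (monomialSet I)ᶜ := by
    intro v
    rw [monomialSet_restrict]
    rfl
  have hmemA : ∀ w : Fin n →₀ ℕ, w ∈ (monomialSet I)ᶜ ↔
      ∃ i, w ∈ stanleyPiece (D.u i) (D.Z i) := by
    intro w; exact (Set.ext_iff.mp D.cover w).trans Set.mem_iUnion
  have hcover : (monomialSet (restrictIdeal K j I))ᶜ =
      ⋃ k, stanleyPiece ((D.u (f k).val).subtypeDomain (· ≠ j))
        ((D.Z (f k).val).subtype (· ≠ j)) := by
    ext v
    rw [hA', hmemA, Set.mem_iUnion]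
    constructor
    · rintro ⟨i, hi⟩
      have h0 : D.u i j = 0 := uj_eq_zero hi
      refine ⟨f.symm ⟨i, h0⟩, ?_⟩
      rw [← mem_piece_iff j _ (by simpa using h0)]
      simpa using hi
    · rintro ⟨k, hk⟩
      exact ⟨(f k).val, (mem_piece_iff j _ (f k).prop _ _).mpr hk⟩
  have hdisj : ∀ k l, k ≠ l →
      Disjoint (stanleyPiece ((D.u (f k).val).subtypeDomain (· ≠ j))
          ((D.Z (f k).val).subtype (· ≠ j)))
        (stanleyPiece ((D.u (f l).val).subtypeDomain (· ≠ j))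
          ((D.Z (f l).val).subtype (· ≠ j))) := by
    intro k l hkl
    rw [Set.disjoint_left]
    intro v hvk hvl
    have hk' := (mem_piece_iff j _ (f k).prop _ _).mpr hvk
    have hl' := (mem_piece_iff j _ (f l).prop _ _).mpr hvl
    have hne : (f k).val ≠ (f l).val := fun h => hkl (f.injective (Subtype.ext h))
    exact Set.disjoint_left.mp (D.disj _ _ hne) hk' hl'
  let D' : StanleyDecomp (monomialSet (restrictIdeal K j I))ᶜ :=
    { m := Fintype.card s
      u := fun k => (D.u (f k).val).subtypeDomain (· ≠ j)
      Z := fun k => (D.Z (f k).val).subtype (· ≠ j)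
      cover := hcover
      disj := hdisj }
  refine le_trans (iInf_le _ D') (iSup_le fun k => ?_)
  show (((D.u (f k).val).subtypeDomain (· ≠ j)).sum fun _ e => (e : ℕ∞)) ≤ _
  have hsum : (((D.u (f k).val).subtypeDomain (· ≠ j)).sum fun _ e => (e : ℕ∞))
      = ((D.u (f k).val).sum fun _ e => (e : ℕ∞)) := by
    refine Finsupp.sum_subtypeDomain_index (N := ℕ∞) (h := fun _ (e : ℕ) => (e : ℕ∞)) fun x hx => ?_
    intro h
    rw [h] at hx
    exact Finsupp.mem_support_iff.mp hx (f k).prop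
  rw [hsum]
  exact le_iSup (fun i => ((D.u i).sum fun _ e => (e : ℕ∞))) (f k).val
end

section
/- Let G be a finite simple graph with vertex set V(G) = {x_1,...,x_n} and set u = x_1 x_2 ⋯ x_n, the product of all the variables. Then for every integer k ≥ 2, the colon ideal (J(G)^(k) : u) equals J(G)^(k−2), where J(G)^(0) is understood to be the whole ring S. -/
open MvPolynomial

section Aux

variable {K : Type*} [Field K] {V : Type*}

/-- The ideal of polynomials each of whose monomials `m` has `m a + m b ≥ k`. -/
def degIdeal (K : Type*) [Field K] {V : Type*} (a b : V) (k : ℕ) :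
    Ideal (MvPolynomial V K) where
  carrier := {f | ∀ m ∈ f.support, k ≤ m a + m b}
  zero_mem' := by simp
  add_mem' := by
    classical
    intro f g hf hg m hm
    rcases Finset.mem_union.mp (MvPolynomial.support_add hm) with h | h
    · exact hf m h
    · exact hg m h
  smul_mem' := by
    classical
    intro c f hf m hm
    rw [smul_eq_mul] at hm
    obtain ⟨m1, hm1, m2, hm2, rfl⟩ := Finset.mem_add.mp (support_mul c f hm)
    have := hf m2 hm2
    simp only [Finsupp.add_apply]
    omega

lemma mem_degIdeal {a b : V} {k : ℕ} {f : MvPolynomial V K} :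
    f ∈ degIdeal K a b k ↔ ∀ m ∈ f.support, k ≤ m a + m b := Iff.rfl

lemma monomial_mem_span_pow (a b : V) (hab : a ≠ b) (k : ℕ) (m : V →₀ ℕ) (r : K)
    (hm : k ≤ m a + m b) :
    monomial m r ∈ (Ideal.span {X a, X b} : Ideal (MvPolynomial V K)) ^ k := by
  classical
  have ha : (X a : MvPolynomial V K) ∈ Ideal.span {X a, X b} :=
    Ideal.subset_span (by simp)
  have hb : (X b : MvPolynomial V K) ∈ Ideal.span {X a, X b} :=
    Ideal.subset_span (by simp)
  have hpow : (X a : MvPolynomial V K) ^ m a * X b ^ m b ∈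
      (Ideal.span {X a, X b} : Ideal (MvPolynomial V K)) ^ k := by
    refine Ideal.pow_le_pow_right hm ?_
    rw [pow_add]
    exact Ideal.mul_mem_mul (Ideal.pow_mem_pow ha _) (Ideal.pow_mem_pow hb _)
  have hsum : m - Finsupp.single a (m a) - Finsupp.single b (m b) +
      (Finsupp.single a (m a) + Finsupp.single b (m b)) = m := by
    ext x
    simp only [Finsupp.add_apply, Finsupp.tsub_apply, Finsupp.single_apply]
    by_cases hx1 : a = x
    · subst hx1
      have hb : ¬ b = a := fun h => hab h.symm
      simp [hb]
    · by_cases hx2 : b = x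
      · subst hx2
        simp [hx1]
      · simp [hx1, hx2]
  have key : monomial m r =
      monomial (m - Finsupp.single a (m a) - Finsupp.single b (m b)) r *
        (X a ^ m a * X b ^ m b) := by
    simp only [X_pow_eq_monomial, monomial_mul, mul_one, hsum]
  rw [key]
  exact Ideal.mul_mem_left _ _ hpow

lemma degIdeal_mul_le (a b : V) (k l : ℕ) :
    degIdeal K a b k * degIdeal K a b l ≤ degIdeal K a b (k + l) := by
  classical
  rw [Ideal.mul_le]
  intro f hf g hg m hm
  obtain ⟨m1, hm1, m2, hm2, rfl⟩ := Finset.mem_add.mp (support_mul f g hm)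
  have h1 := hf m1 hm1
  have h2 := hg m2 hm2
  simp only [Finsupp.add_apply]
  omega

lemma span_pow_eq (a b : V) (hab : a ≠ b) (k : ℕ) :
    (Ideal.span {X a, X b} : Ideal (MvPolynomial V K)) ^ k = degIdeal K a b k := by
  classical
  apply le_antisymm
  · induction k with
    | zero => intro f _ m _; simp
    | succ k ih =>
      have h1 : (Ideal.span {X a, X b} : Ideal (MvPolynomial V K)) ≤ degIdeal K a b 1 := by
        rw [Ideal.span_le]
        rintro f (rfl | rfl) <;>
          · intro m hm
            rw [support_X] at hm
            simp only [Finset.mem_singleton] at hm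
            subst hm
            simp [Finsupp.single_apply]
      calc (Ideal.span {X a, X b} : Ideal (MvPolynomial V K)) ^ (k + 1)
          = Ideal.span {X a, X b} * (Ideal.span {X a, X b}) ^ k := by ring
        _ ≤ degIdeal K a b 1 * degIdeal K a b k := Ideal.mul_mono h1 ih
        _ ≤ degIdeal K a b (1 + k) := degIdeal_mul_le a b 1 k
        _ = degIdeal K a b (k + 1) := by rw [Nat.add_comm]
  · intro f hf
    rw [f.as_sum]
    refine Ideal.sum_mem _ fun m hm => ?_
    exact monomial_mem_span_pow a b hab k m _ (hf m hm)

lemma prod_X_eq_monomial (s : Finset V) :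
    (∏ i ∈ s, X i : MvPolynomial V K) =
      monomial (∑ i ∈ s, Finsupp.single i 1) 1 := by
  classical
  induction s using Finset.cons_induction with
  | empty => simp
  | cons a s ha ih =>
    rw [Finset.prod_cons, Finset.sum_cons, ih, X, monomial_mul, one_mul]

lemma colon_degIdeal {n : ℕ} (a b : Fin n) (hab : a ≠ b) (k : ℕ) (hk : 2 ≤ k) :
    Submodule.colon (degIdeal K a b k)
        (Ideal.span {∏ i : Fin n, (X i : MvPolynomial (Fin n) K)}) =
      degIdeal K a b (k - 2) := by
  classical
  set t : Fin n →₀ ℕ := ∑ i : Fin n, Finsupp.single i 1 with ht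
  have htapp : ∀ x : Fin n, t x = 1 := by
    intro x
    rw [ht, Finsupp.finset_sum_apply]
    simp [Finsupp.single_apply]
  have hu : (∏ i : Fin n, X i : MvPolynomial (Fin n) K) = monomial t 1 :=
    prod_X_eq_monomial _
  ext g
  rw [Ideal.mem_colon_span_singleton, hu, mem_degIdeal, mem_degIdeal]
  constructor
  · intro h m hm
    have hcoeff : coeff (m + t) (g * monomial t 1) = coeff m g := by
      rw [coeff_mul_monomial, mul_one]
    have hmem : m + t ∈ (g * monomial t 1).support := by
      rw [mem_support_iff, hcoeff]
      exact mem_support_iff.mp hm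
    have := h _ hmem
    simp only [Finsupp.add_apply, htapp] at this
    omega
  · intro h m hm
    obtain ⟨m1, hm1, m2, hm2, rfl⟩ := Finset.mem_add.mp (support_mul _ _ hm)
    rw [support_monomial, if_neg one_ne_zero, Finset.mem_singleton] at hm2
    subst hm2
    have := h m1 hm1
    simp only [Finsupp.add_apply, htapp]
    omega

end Aux

/-- Let `G` be a finite simple graph with vertex set
`{x_1,…,x_n}` and let `u = x_1 x_2 ⋯ x_n` be the product of all the variables.
For every integer `k ≥ 2`, the colon ideal `(J(G)^(k) : u)` equals
`J(G)^(k−2)` (where `J(G)^(0) = S`). -/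
theorem symbPow_colon_prod_vars (K : Type*) [Field K] (n : ℕ)
    (G : SimpleGraph (Fin n)) (k : ℕ) (hk : 2 ≤ k) :
    Submodule.colon (coverIdealSymbPow K G k)
        (Ideal.span {∏ i : Fin n, (X i : MvPolynomial (Fin n) K)}) =
      coverIdealSymbPow K G (k - 2) := by
  have key : ∀ e : {p : Fin n × Fin n // G.Adj p.1 p.2},
      Submodule.colon ((Ideal.span {X e.val.1, X e.val.2} : Ideal (MvPolynomial (Fin n) K)) ^ k)
          (Ideal.span {∏ i : Fin n, (X i : MvPolynomial (Fin n) K)}) =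
        (Ideal.span {X e.val.1, X e.val.2}) ^ (k - 2) := by
    intro e
    have hab : e.val.1 ≠ e.val.2 := e.prop.ne
    rw [span_pow_eq _ _ hab k, span_pow_eq _ _ hab (k - 2), colon_degIdeal _ _ hab k hk]
  ext g
  simp only [coverIdealSymbPow, Ideal.mem_colon_span_singleton, Ideal.mem_iInf]
  refine forall_congr' fun e => ?_
  rw [← key e, Ideal.mem_colon_span_singleton]
end

section
/- Let G be a finite simple graph on n vertices. Then for every integer k ≥ 1, sdepth(J(G)^(k)) ≥ n − ν_o(G), where ν_o(G) is the ordered matching number of G. -/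
open MvPolynomial

/-- `a b : Fin r → V` describe an ordered matching of `G` of size `r`:
the edges `{a i, b i}` are pairwise disjoint edges of `G`, the vertices
`a 0, …, a (r-1)` form an independent set, and `G.Adj (a i) (b j)` implies `i ≤ j`. -/
def IsOrderedMatching {V : Type*} (G : SimpleGraph V) {r : ℕ} (a b : Fin r → V) : Prop :=
  (∀ i, G.Adj (a i) (b i)) ∧
  (∀ i j, i ≠ j → ({a i, b i} : Set V) ∩ ({a j, b j} : Set V) = ∅) ∧
  (∀ i j, ¬ G.Adj (a i) (a j)) ∧
  (∀ i j, G.Adj (a i) (b j) → i ≤ j)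

/-- The ordered matching number of a graph: the maximum size of an ordered matching. -/
noncomputable def orderedMatchingNum {V : Type*} (G : SimpleGraph V) : ℕ :=
  sSup {r : ℕ | ∃ a b : Fin r → V, IsOrderedMatching G a b}

/-!
The monomials of `J(G)^(k)` are the `k`-covers of `G`: exponent vectors `v` with
`v p + v q ≥ k` on every edge `pq`. They are split recursively. A state consists of lower
bounds `ℓ` and a list of pinned vertices, each with a partner, and stands for the Stanley set of
the `v ≥ ℓ` that agree with `ℓ` at the pinned vertices. While some edge `xw` between unpinned
vertices has `ℓ x + ℓ w < k`, choose one with `ℓ x` minimal and split on `v x`: either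
`v x > ℓ x` (raise `ℓ x`), or `v x = ℓ x` (pin `x` with partner `w` and raise `ℓ` to `k - ℓ x`
on the neighbours of `x`). Minimality of `ℓ x` makes every pinned value at most the bound of
every later active vertex, which keeps old pins non-adjacent to new pins and partners: the
pinned pairs, newest first, form an ordered matching. When no such edge remains, the state is a
Stanley set inside the `k`-covers with at least `n - ν_o(G)` free variables.
-/

section MonomialIdeal

variable {σ R : Type*} [CommSemiring R]

lemma span_X_pair_pow_le_span_monomial (p q : σ) (k : ℕ) :
    Ideal.span {X p, X q} ^ k ≤
      Ideal.span ((monomial · (1 : R)) '' {v | k ≤ v p + v q}) := by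
  induction k with
  | zero =>
    rw [pow_zero, Ideal.one_eq_top, top_le_iff, Ideal.eq_top_iff_one]
    exact Ideal.subset_span ⟨0, Nat.zero_le _, by simp⟩
  | succ k ih =>
    have hgen : Ideal.span {X p, X q} ≤
        Ideal.span ((monomial · (1 : R)) '' {v | 1 ≤ v p + v q}) := by
      rw [Ideal.span_le, Set.insert_subset_iff, Set.singleton_subset_iff]
      exact ⟨Ideal.subset_span ⟨Finsupp.single p 1, by simp, rfl⟩,
        Ideal.subset_span ⟨Finsupp.single q 1, by simp, rfl⟩⟩
    refine (Ideal.mul_mono ih hgen).trans ?_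
    rw [Ideal.span_mul_span']
    refine Ideal.span_mono ?_
    rintro _ ⟨_, ⟨v, hv, rfl⟩, _, ⟨w, hw, rfl⟩, rfl⟩
    refine ⟨v + w, ?_, by simp⟩
    simp only [Set.mem_ofPred_eq, Finsupp.add_apply] at hv hw ⊢
    omega

lemma monomial_mem_span_X_pair_pow_iff [Nontrivial R] {p q : σ} (hpq : p ≠ q) (k : ℕ)
    (v : σ →₀ ℕ) :
    monomial v (1 : R) ∈ Ideal.span {X p, X q} ^ k ↔ k ≤ v p + v q := by
  constructor
  · intro hv
    obtain ⟨w, hw, hwv⟩ := mem_ideal_span_monomial_image.1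
      (span_X_pair_pow_le_span_monomial p q k hv) v (by classical simp [coeff_monomial])
    have := Finsupp.le_def.1 hwv p
    have := Finsupp.le_def.1 hwv q
    simp only [Set.mem_ofPred_eq] at hw
    omega
  · induction k generalizing v with
    | zero => simp
    | succ k ih =>
      intro hk
      obtain ⟨r, hr, hvr⟩ : ∃ r, (r = p ∨ r = q) ∧ 1 ≤ v r := by
        by_contra! h
        have := h p (Or.inl rfl)
        have := h q (Or.inr rfl)
        omega
      obtain ⟨u, rfl⟩ : ∃ u, v = u + Finsupp.single r 1 :=
        ⟨v - Finsupp.single r 1, (tsub_add_cancel_of_le (by simpa using hvr)).symm⟩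
      have hu : k ≤ u p + u q := by
        rcases hr with rfl | rfl <;> simp [hpq, hpq.symm] at hk <;> omega
      rw [monomial_add_single, pow_one, pow_succ]
      exact Ideal.mul_mem_mul (ih u hu) (Ideal.subset_span (by rcases hr with rfl | rfl <;> simp))

end MonomialIdeal

section StanleyDecomposition

variable {σ : Type*}

def HasStanleyDecompOfDepthAtLeast (A : Set (σ →₀ ℕ)) (d : ℕ) : Prop :=
  ∃ L : List ((σ →₀ ℕ) × Finset σ),
    L.Pairwise (fun P Q => Disjoint (stanleyPiece P.1 P.2) (stanleyPiece Q.1 Q.2)) ∧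
    A = (⋃ P ∈ L, stanleyPiece P.1 P.2) ∧ ∀ P ∈ L, d ≤ P.2.card

lemma hasStanleyDecompOfDepthAtLeast_stanleyPiece {u : σ →₀ ℕ} {Z : Finset σ} {d : ℕ}
    (hd : d ≤ Z.card) : HasStanleyDecompOfDepthAtLeast (stanleyPiece u Z) d :=
  ⟨[(u, Z)], List.pairwise_singleton _ _, by simp, by simpa using hd⟩

lemma HasStanleyDecompOfDepthAtLeast.union {A B : Set (σ →₀ ℕ)} {d : ℕ}
    (hA : HasStanleyDecompOfDepthAtLeast A d) (hB : HasStanleyDecompOfDepthAtLeast B d)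
    (hAB : Disjoint A B) : HasStanleyDecompOfDepthAtLeast (A ∪ B) d := by
  obtain ⟨LA, hLA, rfl, hdA⟩ := hA
  obtain ⟨LB, hLB, rfl, hdB⟩ := hB
  refine ⟨LA ++ LB, List.pairwise_append.2 ⟨hLA, hLB, fun P hP Q hQ => ?_⟩, ?_, ?_⟩
  · exact hAB.mono (Set.subset_iUnion₂_of_subset P hP subset_rfl)
      (Set.subset_iUnion₂_of_subset Q hQ subset_rfl)
  · simp only [List.mem_append, Set.iUnion_or, Set.iUnion_union_distrib]
  · simpa only [List.mem_append, or_imp, forall_and] using And.intro hdA hdB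

lemma HasStanleyDecompOfDepthAtLeast.le_sdepthSet {A : Set (σ →₀ ℕ)} {d : ℕ}
    (hA : HasStanleyDecompOfDepthAtLeast A d) : (d : ℕ∞) ≤ sdepthSet A := by
  obtain ⟨L, hL, hcover, hd⟩ := hA
  have hLget := List.pairwise_iff_get.1 hL
  let D : StanleyDecomp A :=
    { m := L.length
      u := fun i => (L.get i).1
      Z := fun i => (L.get i).2
      cover := by
        rw [hcover]
        ext v
        simp only [Set.mem_iUnion, exists_prop, List.mem_iff_get]
        constructor
        · rintro ⟨_, ⟨i, rfl⟩, hv⟩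
          exact ⟨i, hv⟩
        · rintro ⟨i, hv⟩
          exact ⟨_, ⟨i, rfl⟩, hv⟩
      disj := fun i j hij => by
        rcases lt_or_gt_of_ne hij with h | h
        · exact hLget i j h
        · exact (hLget j i h).symm }
  exact le_iSup_of_le D (le_iInf fun i => by exact_mod_cast hd _ (L.get_mem i))

end StanleyDecomposition

section OrderedMatching

variable {V : Type*} {G : SimpleGraph V}

lemma IsOrderedMatching.injective {r : ℕ} {a b : Fin r → V} (h : IsOrderedMatching G a b) :
    Function.Injective a := by
  intro i j hij
  by_contra hne
  have hmem : a i ∈ ({a i, b i} : Set V) ∩ {a j, b j} := by simp [hij]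
  simp [h.2.1 i j hne] at hmem

lemma IsOrderedMatching.le_orderedMatchingNum [Finite V] {r : ℕ} {a b : Fin r → V}
    (h : IsOrderedMatching G a b) : r ≤ orderedMatchingNum G := by
  refine le_csSup ⟨Nat.card V, ?_⟩ ⟨a, b, h⟩
  rintro s ⟨a', b', h'⟩
  simpa using Nat.card_le_card_of_injective a' h'.injective

end OrderedMatching

def kCovers {V : Type*} (G : SimpleGraph V) (k : ℕ) : Set (V →₀ ℕ) :=
  {v | ∀ p q, G.Adj p q → k ≤ v p + v q}

lemma monomialSet_coverIdealSymbPow (K : Type*) [Field K] {V : Type*} (G : SimpleGraph V)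
    (k : ℕ) : monomialSet (coverIdealSymbPow K G k) = kCovers G k := by
  ext v
  simp only [monomialSet, coverIdealSymbPow, Ideal.mem_iInf, Set.mem_ofPred_eq, kCovers]
  exact ⟨fun h p q hpq => (monomial_mem_span_X_pair_pow_iff hpq.ne k v).1 (h ⟨(p, q), hpq⟩),
    fun h e => (monomial_mem_span_X_pair_pow_iff e.2.ne k v).2 (h _ _ e.2)⟩

/-- `matching` lists the pinned vertices, newest first, each with the edge partner along which
it was pinned. -/
structure SplitState (V : Type*) where
  bound : V → ℕ
  matching : List (V × V)

namespace SplitState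

variable {V : Type*} (G : SimpleGraph V) (k : ℕ) (S : SplitState V)

def pinned : List V := S.matching.map Prod.fst

def region : Set (V →₀ ℕ) :=
  {v | (∀ a ∈ S.pinned, v a = S.bound a) ∧ ∀ z, S.bound z ≤ v z}

def Active (p q : V) : Prop :=
  G.Adj p q ∧ p ∉ S.pinned ∧ q ∉ S.pinned ∧ S.bound p + S.bound q < k

structure Invariant : Prop where
  adj : ∀ e ∈ S.matching, G.Adj e.1 e.2
  covered : ∀ e ∈ S.matching, ∀ q, G.Adj e.1 q → k ≤ S.bound e.1 + S.bound q
  bound_le_active : ∀ e ∈ S.matching, ∀ p q, S.Active G k p q → S.bound e.1 ≤ S.bound p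
  pairwise : S.matching.Pairwise fun e f =>
    ¬ G.Adj e.1 f.1 ∧ ¬ G.Adj f.1 e.2 ∧ Disjoint ({e.1, e.2} : Set V) {f.1, f.2}

def raise [DecidableEq V] (x : V) : SplitState V :=
  ⟨Function.update S.bound x (S.bound x + 1), S.matching⟩

/-- The branch `v x = S.bound x` of the split: on a `k`-cover it forces `v z ≥ k - S.bound x` at
every neighbour `z` of `x`. -/
def pin [DecidableRel G.Adj] (x w : V) : SplitState V :=
  ⟨fun z => if G.Adj x z then max (S.bound z) (k - S.bound x) else S.bound z,
    (x, w) :: S.matching⟩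

def potential [Fintype V] : ℕ := ∑ z, (k - S.bound z)

variable {G k S}

lemma mem_pinned {a : V} : a ∈ S.pinned ↔ ∃ e ∈ S.matching, e.1 = a := by
  simp [pinned]

lemma Active.symm {p q : V} (h : S.Active G k p q) : S.Active G k q p :=
  ⟨h.1.symm, h.2.2.1, h.2.1, by have := h.2.2.2; omega⟩

lemma Active.anti {T : SplitState V} (hpin : ∀ a ∈ S.pinned, a ∈ T.pinned)
    (hle : ∀ z, S.bound z ≤ T.bound z) {p q : V} (h : T.Active G k p q) : S.Active G k p q :=
  ⟨h.1, fun hp => h.2.1 (hpin p hp), fun hq => h.2.2.1 (hpin q hq),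
    by have := hle p; have := hle q; have := h.2.2.2; omega⟩

lemma exists_active_min (h : ∃ p q, S.Active G k p q) :
    ∃ x w, S.Active G k x w ∧ ∀ p q, S.Active G k p q → S.bound x ≤ S.bound p := by
  classical
  have hm : ∃ m, ∃ p q, S.Active G k p q ∧ S.bound p = m :=
    let ⟨p, q, hpq⟩ := h; ⟨_, p, q, hpq, rfl⟩
  obtain ⟨x, w, hxw, hx⟩ := Nat.find_spec hm
  exact ⟨x, w, hxw, fun p q hpq => hx ▸ Nat.find_min' hm ⟨p, q, hpq, rfl⟩⟩

namespace Invariant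

lemma isOrderedMatching (hS : S.Invariant G k) :
    IsOrderedMatching G (fun i : Fin S.matching.length => (S.matching.get i).1)
      (fun i => (S.matching.get i).2) := by
  have hpw := List.pairwise_iff_get.1 hS.pairwise
  refine ⟨fun i => hS.adj _ (List.get_mem _ _), fun i j hij => ?_, fun i j => ?_, fun i j h => ?_⟩
  · rw [← Set.disjoint_iff_inter_eq_empty]
    rcases lt_or_gt_of_ne hij with hlt | hlt
    · exact (hpw i j hlt).2.2
    · exact (hpw j i hlt).2.2.symm
  · rcases lt_trichotomy i j with hlt | rfl | hlt
    · exact (hpw i j hlt).1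
    · exact G.irrefl
    · exact fun h => (hpw j i hlt).1 h.symm
  · by_contra! hlt
    exact (hpw j i hlt).2.1 h

lemma length_le_orderedMatchingNum [Finite V] (hS : S.Invariant G k) :
    S.matching.length ≤ orderedMatchingNum G :=
  hS.isOrderedMatching.le_orderedMatchingNum

lemma pinned_nodup (hS : S.Invariant G k) : S.pinned.Nodup :=
  hS.pairwise.map _ fun e f h => fun hef =>
    Set.disjoint_left.1 h.2.2 (Set.mem_insert _ _) (by simp [hef])

/-- A pinned neighbour `a` of `x` would give `k ≤ ℓ a + ℓ x ≤ ℓ w + ℓ x < k`. -/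
lemma not_adj_of_active (hS : S.Invariant G k) {x w : V} (hxw : S.Active G k x w) :
    ∀ a ∈ S.pinned, ¬ G.Adj a x := by
  intro a ha hax
  obtain ⟨e, he, rfl⟩ := S.mem_pinned.1 ha
  have := hS.covered e he x hax
  have := hS.bound_le_active e he w x hxw.symm
  have := hxw.2.2.2
  omega

lemma region_subset_kCovers (hS : S.Invariant G k) (hA : ¬ ∃ p q, S.Active G k p q) :
    S.region ⊆ kCovers G k := by
  intro v ⟨hpin, hle⟩ p q hpq
  have key : ∀ p q, G.Adj p q → p ∈ S.pinned → k ≤ v p + v q := by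
    intro p q hpq hp
    obtain ⟨e, he, rfl⟩ := S.mem_pinned.1 hp
    have := hS.covered e he q hpq
    have := hpin e.1 hp
    have := hle q
    omega
  by_cases hp : p ∈ S.pinned
  · exact key p q hpq hp
  by_cases hq : q ∈ S.pinned
  · exact add_comm (v p) (v q) ▸ key q p hpq.symm hq
  have : ¬ S.bound p + S.bound q < k := fun h => hA ⟨p, q, hpq, hp, hq, h⟩
  have := hle p
  have := hle q
  omega

lemma of_bound_le (hS : S.Invariant G k) {b : V → ℕ} (hle : ∀ z, S.bound z ≤ b z)
    (hpin : ∀ a ∈ S.pinned, b a = S.bound a) : (⟨b, S.matching⟩ : SplitState V).Invariant G k where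
  adj := hS.adj
  covered e he q hq := by
    have := hS.covered e he q hq
    have := hle q
    have := hpin e.1 (S.mem_pinned.2 ⟨e, he, rfl⟩)
    dsimp only
    omega
  bound_le_active e he p q hpq := by
    have := hS.bound_le_active e he p q
      (Active.anti (S := S) (T := ⟨b, S.matching⟩) (fun _ => id) hle hpq)
    have := hle p
    have := hpin e.1 (S.mem_pinned.2 ⟨e, he, rfl⟩)
    dsimp only
    omega
  pairwise := hS.pairwise

lemma cons (hS : S.Invariant G k) {x w : V} (hxw : G.Adj x w) (hx : x ∉ S.pinned)
    (hw : w ∉ S.pinned) (hcov : ∀ q, G.Adj x q → k ≤ S.bound x + S.bound q)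
    (hmin : ∀ p q, S.Active G k p q → S.bound x ≤ S.bound p)
    (hnx : ∀ a ∈ S.pinned, ¬ G.Adj a x) (hnw : ∀ a ∈ S.pinned, ¬ G.Adj a w) :
    (⟨S.bound, (x, w) :: S.matching⟩ : SplitState V).Invariant G k := by
  have hpinned : ∀ e ∈ S.matching, e.1 ∈ S.pinned := fun e he => S.mem_pinned.2 ⟨e, he, rfl⟩
  have hactive : ∀ p q, Active G k ⟨S.bound, (x, w) :: S.matching⟩ p q → S.Active G k p q :=
    fun p q => Active.anti (T := ⟨S.bound, (x, w) :: S.matching⟩)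
      (fun a ha => List.mem_cons_of_mem x ha) fun _ => le_rfl
  refine ⟨?_, ?_, ?_, List.Pairwise.cons (fun f hf => ?_) hS.pairwise⟩ <;>
    simp only [List.mem_cons, forall_eq_or_imp]
  · exact ⟨hxw, hS.adj⟩
  · exact ⟨hcov, hS.covered⟩
  · exact ⟨fun p q h => hmin p q (hactive p q h),
      fun e he p q h => hS.bound_le_active e he p q (hactive p q h)⟩
  · have hf1 := hpinned f hf
    refine ⟨fun h => hnx _ hf1 h.symm, hnw _ hf1, ?_⟩
    simp only [Set.disjoint_insert_left, Set.disjoint_insert_right, Set.disjoint_singleton,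
      Set.mem_insert_iff, Set.mem_singleton_iff, not_or]
    have hadj := hS.adj f hf
    refine ⟨⟨fun h => hx (h ▸ hf1), fun h => hw (h ▸ hf1)⟩, fun h => hnx _ hf1 (h ▸ hadj),
      fun h => hnw _ hf1 (h ▸ hadj)⟩

end Invariant

section Raise

variable [DecidableEq V] {x : V}

lemma Invariant.raise (hS : S.Invariant G k) (hx : x ∉ S.pinned) :
    (S.raise x).Invariant G k :=
  hS.of_bound_le (fun z => by by_cases hz : z = x <;> simp [hz])
    fun a ha => Function.update_of_ne (by rintro rfl; exact hx ha) _ _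

lemma region_raise (hx : x ∉ S.pinned) :
    (S.raise x).region = {v ∈ S.region | S.bound x < v x} := by
  have hpin : ∀ a ∈ S.pinned, Function.update S.bound x (S.bound x + 1) a = S.bound a :=
    fun a ha => Function.update_of_ne (by rintro rfl; exact hx ha) _ _
  ext v
  simp only [region, raise, pinned] at hpin ⊢
  constructor
  · rintro ⟨hv, hle⟩
    have hvx : S.bound x < v x := by simpa using hle x
    refine ⟨⟨fun a ha => (hv a ha).trans (hpin a ha), fun z => ?_⟩, hvx⟩
    by_cases hz : z = x
    · exact hz ▸ hvx.le
    · simpa [hz] using hle z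
  · rintro ⟨⟨hv, hle⟩, hx⟩
    refine ⟨fun a ha => (hv a ha).trans (hpin a ha).symm, fun z => ?_⟩
    by_cases hz : z = x
    · subst hz; simpa using hx
    · simpa [hz] using hle z

lemma potential_raise_lt [Fintype V] (hx : S.bound x < k) :
    (S.raise x).potential k < S.potential k := by
  refine Finset.sum_lt_sum (fun z _ => ?_) ⟨x, Finset.mem_univ x, by simp [raise]; omega⟩
  by_cases hz : z = x <;> simp [raise, hz]; omega

end Raise

section Pin

variable [DecidableRel G.Adj]

lemma bound_le_pin_bound (x w z : V) : S.bound z ≤ (S.pin G k x w).bound z := by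
  simp only [pin]; split_ifs <;> simp

variable {x w : V}

lemma pin_bound_of_not_adj {z : V} (hz : ¬ G.Adj x z) : (S.pin G k x w).bound z = S.bound z := by
  simp [pin, hz]

lemma Invariant.pin (hS : S.Invariant G k) (hxw : S.Active G k x w)
    (hmin : ∀ p q, S.Active G k p q → S.bound x ≤ S.bound p) : (S.pin G k x w).Invariant G k := by
  have hnx := hS.not_adj_of_active hxw
  have hbx : (S.pin G k x w).bound x = S.bound x := pin_bound_of_not_adj G.irrefl
  have hT : (⟨(S.pin G k x w).bound, S.matching⟩ : SplitState V).Invariant G k :=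
    hS.of_bound_le (bound_le_pin_bound x w) fun a ha =>
      pin_bound_of_not_adj fun h => hnx a ha h.symm
  refine hT.cons hxw.1 hxw.2.1 hxw.2.2.1 (fun q hq => ?_) (fun p q hpq => ?_) hnx
    (hS.not_adj_of_active hxw.symm)
  · have : k - S.bound x ≤ (S.pin G k x w).bound q := by
      simp only [SplitState.pin, if_pos hq]
      exact le_max_right _ _
    dsimp only
    omega
  · have := hmin p q (Active.anti (S := S) (T := ⟨(S.pin G k x w).bound, S.matching⟩)
      (fun _ => id) (bound_le_pin_bound x w) hpq)
    have := bound_le_pin_bound (S := S) (G := G) (k := k) x w p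
    dsimp only
    omega

lemma kCovers_inter_region_pin (hx : x ∉ S.pinned) (hnx : ∀ a ∈ S.pinned, ¬ G.Adj a x) :
    kCovers G k ∩ (S.pin G k x w).region = kCovers G k ∩ {v ∈ S.region | v x = S.bound x} := by
  have hpin : ∀ a ∈ S.pinned, (S.pin G k x w).bound a = S.bound a :=
    fun a ha => pin_bound_of_not_adj fun h => hnx a ha h.symm
  have hbx : (S.pin G k x w).bound x = S.bound x := pin_bound_of_not_adj G.irrefl
  ext v
  simp only [Set.mem_inter_iff, Set.mem_ofPred_eq, region]
  refine and_congr_right fun hv => ⟨fun ⟨hvpin, hle⟩ => ?_, fun ⟨⟨hvpin, hle⟩, hvx⟩ => ?_⟩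
  · have hvx : v x = S.bound x := hbx ▸ hvpin x List.mem_cons_self
    refine ⟨⟨fun a ha => ?_, fun z => (bound_le_pin_bound x w z).trans (hle z)⟩, hvx⟩
    exact (hvpin a (List.mem_cons_of_mem x ha)).trans (hpin a ha)
  · refine ⟨fun a ha => ?_, fun z => ?_⟩
    · rcases List.mem_cons.1 ha with rfl | ha
      · exact hvx.trans hbx.symm
      · exact (hvpin a ha).trans (hpin a ha).symm
    · by_cases hz : G.Adj x z
      · have := hv x z hz
        simp only [SplitState.pin, if_pos hz]
        exact max_le (hle z) (by omega)
      · exact (pin_bound_of_not_adj hz).trans_le (hle z)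

lemma potential_pin_lt [Fintype V] (hxw : S.Active G k x w) :
    (S.pin G k x w).potential k < S.potential k := by
  refine Finset.sum_lt_sum (fun z _ => Nat.sub_le_sub_left (bound_le_pin_bound x w z) k)
    ⟨w, Finset.mem_univ w, ?_⟩
  have := hxw.2.2.2
  simp only [pin, hxw.1, if_true]
  omega

end Pin

lemma region_eq_union (x : V) :
    S.region = {v ∈ S.region | v x = S.bound x} ∪ {v ∈ S.region | S.bound x < v x} := by
  ext v
  simp only [Set.mem_union, Set.mem_ofPred_eq, ← and_or_left, iff_self_and]
  exact fun hv => (hv.2 x).eq_or_lt'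

lemma region_eq_stanleyPiece [Fintype V] [DecidableEq V] :
    S.region = stanleyPiece (Finsupp.equivFunOnFinite.symm S.bound) S.pinned.toFinsetᶜ := by
  ext v
  simp [region, stanleyPiece, Finsupp.le_def, and_comm]

variable [Fintype V] [DecidableEq V]

lemma Invariant.hasStanleyDecomp_of_not_active (hS : S.Invariant G k)
    (hA : ¬ ∃ p q, S.Active G k p q) :
    HasStanleyDecompOfDepthAtLeast (kCovers G k ∩ S.region)
      (Fintype.card V - orderedMatchingNum G) := by
  rw [Set.inter_eq_right.2 (hS.region_subset_kCovers hA), region_eq_stanleyPiece]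
  refine hasStanleyDecompOfDepthAtLeast_stanleyPiece ?_
  rw [Finset.card_compl, List.toFinset_card_of_nodup hS.pinned_nodup, pinned, List.length_map]
  exact Nat.sub_le_sub_left hS.length_le_orderedMatchingNum _

variable [DecidableRel G.Adj]

theorem Invariant.hasStanleyDecomp {S : SplitState V} (hS : S.Invariant G k) :
    HasStanleyDecompOfDepthAtLeast (kCovers G k ∩ S.region)
      (Fintype.card V - orderedMatchingNum G) := by
  by_cases hA : ∃ p q, S.Active G k p q
  · obtain ⟨x, w, hxw, hmin⟩ := exists_active_min hA
    have hx : S.bound x < k := by have := hxw.2.2.2; omega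
    have hdisj : Disjoint (kCovers G k ∩ (S.pin G k x w).region)
        (kCovers G k ∩ (S.raise x).region) := by
      rw [kCovers_inter_region_pin hxw.2.1 (hS.not_adj_of_active hxw), region_raise hxw.2.1]
      exact Set.disjoint_left.2 fun v ⟨_, _, hv⟩ ⟨_, _, hv'⟩ => hv'.ne' hv
    rw [S.region_eq_union x, Set.inter_union_distrib_left,
      ← kCovers_inter_region_pin (w := w) hxw.2.1 (hS.not_adj_of_active hxw),
      ← region_raise hxw.2.1]
    exact ((hS.pin hxw hmin).hasStanleyDecomp).union ((hS.raise hxw.2.1).hasStanleyDecomp) hdisj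
  · exact hS.hasStanleyDecomp_of_not_active hA
termination_by S.potential k
decreasing_by
  · exact potential_pin_lt hxw
  · exact potential_raise_lt hx

end SplitState

lemma le_sdepthSet_kCovers {V : Type*} [Fintype V] (G : SimpleGraph V) (k : ℕ) :
    ((Fintype.card V - orderedMatchingNum G : ℕ) : ℕ∞) ≤ sdepthSet (kCovers G k) := by
  classical
  let S₀ : SplitState V := ⟨fun _ => 0, []⟩
  have hS₀ : S₀.Invariant G k := ⟨by simp [S₀], by simp [S₀], by simp [S₀], List.Pairwise.nil⟩
  have hregion : S₀.region = Set.univ := by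
    ext v
    simp [S₀, SplitState.region, SplitState.pinned]
  simpa [hregion] using hS₀.hasStanleyDecomp.le_sdepthSet

theorem sdepth_ideal_symbPow_lower_bound_general (K : Type*) [Field K] (n : ℕ)
    (G : SimpleGraph (Fin n)) (k : ℕ) :
    ((n - orderedMatchingNum G : ℕ) : ℕ∞) ≤ sdepthIdeal (coverIdealSymbPow K G k) := by
  rw [sdepthIdeal, monomialSet_coverIdealSymbPow]
  simpa using le_sdepthSet_kCovers G k

/-- For a finite simple graph `G` on `n` vertices and every
integer `k ≥ 1`, `sdepth(J(G)^(k)) ≥ n − ν_o(G)`, where `ν_o(G)` is the ordered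
matching number of `G`. -/
theorem sdepth_ideal_symbPow_lower_bound (K : Type*) [Field K] (n : ℕ)
    (G : SimpleGraph (Fin n)) (k : ℕ) (hk : 1 ≤ k) :
    ((n - orderedMatchingNum G : ℕ) : ℕ∞) ≤ sdepthIdeal (coverIdealSymbPow K G k) :=
  sdepth_ideal_symbPow_lower_bound_general K n G k
end

section
/- Let G be a finite simple graph with vertex set {x_1,...,x_n}, let x_m be a vertex of G, let S' be the polynomial ring in the variables {x_1,...,x_n} \ {x_m}, and let u = ∏_{x ∈ N_G(x_m)} x be the product of the neighbors of x_m. Then for every integer k ≥ 1, J(G)^(k) ∩ S' = u^k · J(G \ N_G[x_m])^(k) S', where G \ N_G[x_m] is the graph obtained from G by deleting the closed neighborhood of x_m and J(G \ N_G[x_m])^(k) S' denotes the extension to S' of the k-th symbolic power of its cover ideal. -/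
/-! Every ideal in sight is a monomial ideal, so the identity reduces to one between sets of
exponent vectors. Since `(x_a, x_b)^k` is spanned by the monomials `x^d` with `d a + d b ≥ k`,
`J(G)^(k)` is spanned by the monomials whose exponent is a `k`-cover of `G`. A monomial of `S'`
has exponent `0` at `x_m`, so it is a `k`-cover of `G` iff its exponent is at least `k` at every
neighbour of `x_m` and it is a `k`-cover of `G \ N_G[x_m]` (whose edges avoid those neighbours),
i.e. iff it is `u^k` times a `k`-cover of `G \ N_G[x_m]`. -/

open MvPolynomial

/-- The graph `G \ N_G[x_m]` obtained by deleting the closed neighborhood of the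
vertex `x_m`, regarded as a graph on the vertex set `{x_1,…,x_n} \ {x_m}` (the
vertices in `N_G(x_m)` become isolated and contribute no edges). -/
def deleteClosedNbhd {n : ℕ} (G : SimpleGraph (Fin n)) (m : Fin n) :
    SimpleGraph {i : Fin n // i ≠ m} where
  Adj a b := G.Adj a.val b.val ∧ ¬ G.Adj m a.val ∧ ¬ G.Adj m b.val
  symm := by
    constructor
    intro a b hab
    exact ⟨hab.1.symm, hab.2.2, hab.2.1⟩
  loopless := by
    constructor
    intro a ha
    exact (G.ne_of_adj ha.1) rfl

open MvPolynomial Finsupp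
open scoped Pointwise

namespace MvPolynomial

variable {σ : Type*} (R : Type*) [CommSemiring R]

noncomputable abbrev monomialIdeal (U : Set (σ →₀ ℕ)) : Ideal (MvPolynomial σ R) :=
  Ideal.span ((fun s => monomial s (1 : R)) '' U)

variable {R}

theorem mem_monomialIdeal_of_isUpperSet {U : Set (σ →₀ ℕ)} (hU : IsUpperSet U)
    {f : MvPolynomial σ R} : f ∈ monomialIdeal R U ↔ ∀ d ∈ f.support, d ∈ U := by
  rw [mem_ideal_span_monomial_image]
  exact forall₂_congr fun d _ => ⟨fun ⟨s, hs, hsd⟩ => hU hsd hs, fun hd => ⟨d, hd, le_rfl⟩⟩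

theorem monomialIdeal_mul (U V : Set (σ →₀ ℕ)) :
    monomialIdeal R U * monomialIdeal R V = monomialIdeal R (U + V) := by
  unfold monomialIdeal
  rw [Ideal.span_mul_span', ← Set.image2_mul, Set.image2_image_left, Set.image2_image_right,
    ← Set.image2_add, Set.image_image2]
  simp only [monomial_mul, mul_one]

theorem monomialIdeal_le_monomialIdeal {U V : Set (σ →₀ ℕ)} (h : ∀ u ∈ U, ∃ v ∈ V, v ≤ u) :
    monomialIdeal R U ≤ monomialIdeal R V := by
  rw [monomialIdeal, Ideal.span_le]
  rintro _ ⟨u, hu, rfl⟩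
  rw [SetLike.mem_coe, mem_ideal_span_monomial_image]
  intro d hd
  rw [Finset.mem_singleton.1 (support_monomial_subset hd)]
  exact h u hu

theorem span_X_pair_pow {a b : σ} (hab : a ≠ b) (k : ℕ) :
    (Ideal.span {X a, X b} : Ideal (MvPolynomial σ R)) ^ k =
      monomialIdeal R {d | k ≤ d a + d b} := by
  induction k with
  | zero =>
    rw [pow_zero, Ideal.one_eq_top, eq_comm, Ideal.eq_top_iff_one, one_def]
    exact Ideal.subset_span ⟨0, by simp, rfl⟩
  | succ k ih =>
    have hpair : (Ideal.span {X a, X b} : Ideal (MvPolynomial σ R)) =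
        monomialIdeal R {single a 1, single b 1} := by
      rw [monomialIdeal, Set.image_pair]; rfl
    rw [pow_succ, ih, hpair, monomialIdeal_mul]
    apply le_antisymm <;> apply monomialIdeal_le_monomialIdeal
    · rintro _ ⟨d, hd, e, rfl | rfl, rfl⟩
      · refine ⟨_, ?_, le_rfl⟩
        simp [hab] at hd ⊢
        omega
      · refine ⟨_, ?_, le_rfl⟩
        simp [hab.symm] at hd ⊢
        omega
    · intro d hd
      by_cases ha : 1 ≤ d a
      · refine ⟨d, ⟨d - single a 1, ?_, single a 1, by simp,
          tsub_add_cancel_of_le (single_le_iff.2 ha)⟩, le_rfl⟩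
        simp [hab] at hd ⊢
        omega
      · refine ⟨d, ⟨d - single b 1, ?_, single b 1, by simp,
          tsub_add_cancel_of_le (single_le_iff.2 (by simp at hd; omega))⟩, le_rfl⟩
        simp [hab.symm] at hd ⊢
        omega

theorem comap_rename_monomialIdeal {τ : Type*} {ι : σ → τ} (hι : Function.Injective ι)
    {U : Set (τ →₀ ℕ)} (hU : IsUpperSet U) :
    (monomialIdeal R U).comap (rename ι) = monomialIdeal R (mapDomain ι ⁻¹' U) := by
  classical
  ext f
  rw [Ideal.mem_comap, mem_monomialIdeal_of_isUpperSet hU,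
    mem_monomialIdeal_of_isUpperSet (hU.preimage mapDomain_mono),
    support_rename_of_injective hι, Finset.forall_mem_image]
  rfl

theorem span_monomial_eq_monomialIdeal (e : σ →₀ ℕ) :
    Ideal.span {monomial e (1 : R)} = monomialIdeal R {e} := by
  rw [monomialIdeal, Set.image_singleton]

end MvPolynomial

theorem Set.mem_singleton_add_iff {α : Type*} [AddCommMonoid α] [PartialOrder α]
    [CanonicallyOrderedAdd α] [Sub α] [OrderedSub α] [AddLeftReflectLE α] {e d : α}
    {U : Set α} : d ∈ {e} + U ↔ e ≤ d ∧ d - e ∈ U := by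
  rw [Set.singleton_add]
  constructor
  · rintro ⟨c, hc, rfl⟩
    exact ⟨le_self_add, by rwa [add_tsub_cancel_left]⟩
  · rintro ⟨hle, hd⟩
    exact ⟨d - e, hd, add_tsub_cancel_of_le hle⟩

namespace SimpleGraph

variable {V : Type*} (G : SimpleGraph V)

def kCovers (k : ℕ) : Set (V →₀ ℕ) := {d | ∀ a b, G.Adj a b → k ≤ d a + d b}

theorem isUpperSet_kCovers (k : ℕ) : IsUpperSet (G.kCovers k) :=
  fun _ _ hle hd a b hab => (hd a b hab).trans (add_le_add (hle a) (hle b))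

end SimpleGraph

theorem coverIdealSymbPow_eq_monomialIdeal (K : Type*) [Field K] {V : Type*}
    (G : SimpleGraph V) (k : ℕ) : coverIdealSymbPow K G k = monomialIdeal K (G.kCovers k) := by
  ext f
  have mem_pair_pow {a b : V} (hab : G.Adj a b) :
      f ∈ Ideal.span {X a, X b} ^ k ↔ ∀ d ∈ f.support, k ≤ d a + d b := by
    rw [span_X_pair_pow hab.ne, mem_monomialIdeal_of_isUpperSet]
    · rfl
    · exact fun _ _ hle hd => hd.trans (add_le_add (hle a) (hle b))
  rw [coverIdealSymbPow, Ideal.mem_iInf, mem_monomialIdeal_of_isUpperSet (G.isUpperSet_kCovers k)]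
  simp only [Subtype.forall, Prod.forall]
  exact ⟨fun h d hd a b hab => (mem_pair_pow hab).1 (h a b hab) d hd,
    fun h a b hab => (mem_pair_pow hab).2 fun d hd => h d hd a b hab⟩

theorem mapDomain_val_mem_kCovers_iff {n : ℕ} (G : SimpleGraph (Fin n)) (m : Fin n) (k : ℕ)
    (d : {i : Fin n // i ≠ m} →₀ ℕ) :
    mapDomain Subtype.val d ∈ G.kCovers k ↔
      (∀ i : {i : Fin n // i ≠ m}, G.Adj m i → k ≤ d i) ∧
        d ∈ (deleteClosedNbhd G m).kCovers k := by
  have hval (i : {i : Fin n // i ≠ m}) : mapDomain Subtype.val d i = d i :=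
    mapDomain_apply Subtype.val_injective d i
  have hm : mapDomain Subtype.val d m = 0 :=
    mapDomain_of_notMem_range _ _ fun ⟨i, hi⟩ => i.2 hi
  constructor
  · intro h
    refine ⟨fun i hi => ?_, fun a b hab => ?_⟩
    · simpa [hm, hval] using h m i hi
    · simpa [hval] using h a b hab.1
  · rintro ⟨hnbr, hcov⟩ p q hpq
    by_cases hp : p = m
    · subst hp
      simpa [hm, hval ⟨q, hpq.ne'⟩] using hnbr ⟨q, hpq.ne'⟩ hpq
    by_cases hq : q = m
    · subst hq
      simpa [hm, hval ⟨p, hpq.ne⟩] using hnbr ⟨p, hpq.ne⟩ hpq.symm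
    lift p to {i : Fin n // i ≠ m} using hp
    lift q to {i : Fin n // i ≠ m} using hq
    rw [hval, hval]
    by_cases hmp : G.Adj m p
    · exact (hnbr p hmp).trans le_self_add
    by_cases hmq : G.Adj m q
    · exact (hnbr q hmq).trans le_add_self
    exact hcov p q ⟨hpq, hmp, hmq⟩

theorem preimage_mapDomain_val_kCovers {n : ℕ} (G : SimpleGraph (Fin n)) [DecidableRel G.Adj]
    (m : Fin n) (k : ℕ) :
    mapDomain Subtype.val ⁻¹' G.kCovers k =
      {indicator (Finset.univ.filter fun i : {i : Fin n // i ≠ m} => G.Adj m i) fun _ _ => k} +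
        (deleteClosedNbhd G m).kCovers k := by
  set e := indicator (Finset.univ.filter fun i : {i : Fin n // i ≠ m} => G.Adj m i)
    fun _ _ => k with he
  have he_apply (i : {i : Fin n // i ≠ m}) : e i = if G.Adj m i then k else 0 := by
    simp [he, indicator_apply]
  ext d
  rw [Set.mem_preimage, mapDomain_val_mem_kCovers_iff, Set.mem_singleton_add_iff, le_def]
  refine and_congr (forall_congr' fun i => ?_) ?_
  · rw [he_apply]
    split_ifs with hi <;> simp [hi]
  · refine forall₂_congr fun a b => imp_congr_right fun hab => ?_
    rw [tsub_apply, tsub_apply, he_apply, he_apply, if_neg hab.2.1, if_neg hab.2.2, tsub_zero,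
      tsub_zero]

theorem symbPow_restrict_eq_general (K : Type*) [Field K] (n : ℕ)
    (G : SimpleGraph (Fin n)) [DecidableRel G.Adj] (m : Fin n) (k : ℕ) :
    restrictIdeal K m (coverIdealSymbPow K G k) =
      Ideal.span {(∏ i ∈ Finset.univ.filter (fun i : {i : Fin n // i ≠ m} => G.Adj m i.val),
          (X i : MvPolynomial {i : Fin n // i ≠ m} K)) ^ k} *
        coverIdealSymbPow K (deleteClosedNbhd G m) k := by
  rw [restrictIdeal, varDeletionHom, coverIdealSymbPow_eq_monomialIdeal,
    coverIdealSymbPow_eq_monomialIdeal,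
    comap_rename_monomialIdeal Subtype.val_injective (G.isUpperSet_kCovers k),
    ← Finset.prod_pow, prod_X_pow (fun _ => k), span_monomial_eq_monomialIdeal, monomialIdeal_mul,
    preimage_mapDomain_val_kCovers]

/-- Let `G` be a finite simple graph with vertex set
`{x_1,…,x_n}`, let `x_m` be a vertex, let `S'` be the polynomial ring in the
remaining variables and `u = ∏_{x ∈ N_G(x_m)} x`. Then for every `k ≥ 1`,
`J(G)^(k) ∩ S' = u^k · J(G \ N_G[x_m])^(k) S'`. -/
theorem symbPow_restrict_eq (K : Type*) [Field K] (n : ℕ)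
    (G : SimpleGraph (Fin n)) [DecidableRel G.Adj] (m : Fin n) (k : ℕ) (hk : 1 ≤ k) :
    restrictIdeal K m (coverIdealSymbPow K G k) =
      Ideal.span {(∏ i ∈ Finset.univ.filter (fun i : {i : Fin n // i ≠ m} => G.Adj m i.val),
          (X i : MvPolynomial {i : Fin n // i ≠ m} K)) ^ k} *
        coverIdealSymbPow K (deleteClosedNbhd G m) k :=
  symbPow_restrict_eq_general K n G m k
end
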